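/- For probability distributions p and q on a finite set S with q(s) > 0 for all s and p(s) = f(s)q(s)/Z for a strictly positive function f with Z = ∑_s f(s)q(s), the dynamic range γ = (max_s f(s))/(min_s f(s)) satisfies γ ≥ B(p,q)^{-4}, where B(p,q) = ∑_s √(p(s)q(s)) is the Bhattacharyya coefficient. -/

import Mathlib

/-! If `f` takes values in `[m, M]`, then `p ≥ (m / Z) q` and `q ≥ (Z / M) p` pointwise. A pointwise
bound `p ≥ a q` forces `B(p, q) ≥ √a` (this is `D_{1/2}(p‖q) ≤ D_∞(p‖q)` in elementary form), so
`B² ≥ √(m / Z) · √(Z / M) = √(m / M)`, i.e. `B⁻⁴ ≤ M / m`. -/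

open Finset

theorem sqrt_le_sum_sqrt_mul_of_mul_le {ι : Type*} (s : Finset ι) (p q : ι → ℝ) (a : ℝ)
    (hq0 : ∀ i ∈ s, 0 ≤ q i) (hq1 : ∑ i ∈ s, q i = 1) (h : ∀ i ∈ s, a * q i ≤ p i) :
    √a ≤ ∑ i ∈ s, √(p i * q i) :=
  calc √a = ∑ i ∈ s, √a * q i := by rw [← mul_sum, hq1, mul_one]
    _ ≤ ∑ i ∈ s, √(p i * q i) := sum_le_sum fun i hi => by
      calc √a * q i = √(a * (q i * q i)) := by
            rw [Real.sqrt_mul' _ (mul_self_nonneg _), Real.sqrt_mul_self (hq0 i hi)]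
        _ ≤ √(p i * q i) := Real.sqrt_le_sqrt <| by
            rw [← mul_assoc]; exact mul_le_mul_of_nonneg_right (h i hi) (hq0 i hi)

theorem dynamic_range_bhattacharyya_bound
    {S : Type*} [Fintype S] [Nonempty S]
    (p q f : S → ℝ) (Z : ℝ)
    (hp0 : ∀ s, 0 ≤ p s) (hp1 : ∑ s, p s = 1)
    (hq0 : ∀ s, 0 < q s) (hq1 : ∑ s, q s = 1)
    (hf : ∀ s, 0 < f s)
    (hZ : Z = ∑ s, f s * q s)
    (hpf : ∀ s, p s = f s * q s / Z) :
    (∑ s, Real.sqrt (p s * q s))⁻¹ ^ 4 ≤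
      (univ.sup' univ_nonempty f) / (univ.inf' univ_nonempty f) := by
  set m := univ.inf' univ_nonempty f
  set M := univ.sup' univ_nonempty f
  set B := ∑ s, √(p s * q s)
  have hm : 0 < m := (lt_inf'_iff _).2 fun s _ => hf s
  have hM : 0 < M := (hf (Classical.arbitrary S)).trans_le (le_sup' f (mem_univ _))
  have hZ0 : 0 < Z := hZ ▸ sum_pos (fun s _ => mul_pos (hf s) (hq0 s)) univ_nonempty
  have hBm : √(m / Z) ≤ B := sqrt_le_sum_sqrt_mul_of_mul_le _ p q _ (fun s _ => (hq0 s).le) hq1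
    fun s _ => by
      rw [hpf, div_mul_eq_mul_div]; gcongr; exacts [(hq0 s).le, inf'_le f (mem_univ s)]
  have hBM : √(Z / M) ≤ B := by
    simp_rw [B, mul_comm (p _)]
    refine sqrt_le_sum_sqrt_mul_of_mul_le _ q p _ (fun s _ => hp0 s) hp1 fun s _ => ?_
    rw [hpf, show Z / M * (f s * q s / Z) = f s / M * q s by field_simp]
    exact mul_le_of_le_one_left (hq0 s).le ((div_le_one hM).2 (le_sup' f (mem_univ s)))
  have hB2 : √(m / M) ≤ B ^ 2 := by
    rw [← div_mul_div_cancel₀ hZ0.ne', Real.sqrt_mul (div_nonneg hm.le hZ0.le), sq]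
    exact mul_le_mul hBm hBM (Real.sqrt_nonneg _) ((Real.sqrt_nonneg _).trans hBm)
  have hB4 : m / M ≤ B ^ 4 := by
    calc m / M = √(m / M) ^ 2 := (Real.sq_sqrt (div_nonneg hm.le hM.le)).symm
      _ ≤ (B ^ 2) ^ 2 := pow_le_pow_left₀ (Real.sqrt_nonneg _) hB2 2
      _ = B ^ 4 := by ring
  rw [inv_pow, ← inv_div]
  exact inv_anti₀ (div_pos hm hM) hB4
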